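/- arXiv:math/9904110 — 4 statements merged into one kernel-verified Lean document; each statement's English description precedes it below -/
import Mathlib

section
/- For all natural numbers n, p, k with p ≤ n and k ≥ 1, one has the identity ∑_{j=0}^{p} (-1)^{j} · C(n-j, p-j) · C(n+k-j, k) · C(n+1, j) = C(n+k-p, k) · C(k-1, p), where the sum is taken in the integers. -/
/-!
Since `C(n-j, p-j) * C(n+k-j, k) = C(n+k-j, p-j) * C(n+k-p, k)` (trinomial revision), the factor
`C(n+k-p, k)` comes out of the sum. What remains, `∑ j, (-1)^j C(n+1, j) C(n+k-j, p-j)`, is the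
inclusion–exclusion count of the `p`-subsets of an `(n+k)`-set that avoid a fixed `(n+1)`-subset,
namely `C(k-1, p)`.
-/

open Finset

namespace Nat

theorem choose_sub_mul_choose_add_sub {n p j : ℕ} (k : ℕ) (hjp : j ≤ p) :
    (n - j).choose (p - j) * (n + k - j).choose k
      = (n + k - j).choose (p - j) * (n + k - p).choose k := by
  rcases k.eq_zero_or_pos with rfl | hk
  · simp
  by_cases hpn : p ≤ n
  · rw [choose_symm_of_eq_add (by omega : n + k - j = k + (n - j)), mul_comm,
      choose_mul (by omega), choose_symm_of_eq_add (by omega : n + k - p = k + (n - p))]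
    congr 2 <;> omega
  · have hfst : (n - j).choose (p - j) * (n + k - j).choose k = 0 := by
      rcases le_or_gt j n with hjn | hnj
      · rw [choose_eq_zero_of_lt (by omega : n - j < p - j), zero_mul]
      · rw [choose_eq_zero_of_lt (by omega : n + k - j < k), mul_zero]
    rw [hfst, choose_eq_zero_of_lt (by omega : n + k - p < k), mul_zero]

end Nat

theorem sum_range_neg_one_pow_mul_choose_succ_mul (N m : ℕ) (f : ℕ → ℤ) :
    ∑ j ∈ range (m + 1), (-1 : ℤ) ^ j * (N + 1).choose j * f j
      = ∑ j ∈ range (m + 1), (-1 : ℤ) ^ j * N.choose j * f j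
        - ∑ j ∈ range m, (-1 : ℤ) ^ j * N.choose j * f (j + 1) := by
  simp only [sum_range_succ' _ m, Nat.choose_succ_succ, Nat.cast_add, Nat.choose_zero_right]
  rw [eq_sub_iff_add_eq, add_right_comm, ← sum_add_distrib]
  congr 1
  refine sum_congr rfl fun j _ => ?_
  ring

theorem sum_range_neg_one_pow_mul_choose_mul_choose_sub (N r p : ℕ) (hNr : N ≤ r) :
    ∑ j ∈ range (p + 1), (-1 : ℤ) ^ j * N.choose j * (r - j).choose (p - j)
      = (r - N).choose p := by
  induction N generalizing r p with
  | zero => simp [sum_range_succ']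
  | succ N ih =>
    obtain ⟨s, rfl⟩ : ∃ s, r = s + 1 := ⟨r - 1, by omega⟩
    rcases p with _ | q
    · simp
    · rw [sum_range_neg_one_pow_mul_choose_succ_mul, ih (s + 1) (q + 1) (by omega)]
      have hshift : ∑ j ∈ range (q + 1),
            (-1 : ℤ) ^ j * N.choose j * (s + 1 - (j + 1)).choose (q + 1 - (j + 1))
          = (s - N).choose q := by
        simp only [Nat.add_sub_add_right]
        exact ih s q (by omega)
      rw [hshift, show s + 1 - N = s - N + 1 by omega, Nat.choose_succ_succ]
      push_cast
      ring

theorem stmt_1_general (n p k : ℕ) (hk : 1 ≤ k) :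
    ∑ j ∈ Finset.range (p + 1),
      (-1 : ℤ) ^ j * (Nat.choose (n - j) (p - j)) * (Nat.choose (n + k - j) k) *
        (Nat.choose (n + 1) j)
      = (Nat.choose (n + k - p) k) * (Nat.choose (k - 1) p) := by
  have hterm : ∀ j ∈ range (p + 1),
      (-1 : ℤ) ^ j * (n - j).choose (p - j) * (n + k - j).choose k * (n + 1).choose j
        = (n + k - p).choose k * ((-1 : ℤ) ^ j * (n + 1).choose j * (n + k - j).choose (p - j)) := by
    intro j hj
    have h := congrArg (Nat.cast : ℕ → ℤ)
      (Nat.choose_sub_mul_choose_add_sub (n := n) k (mem_range_succ_iff.mp hj))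
    push_cast at h
    linear_combination (-1 : ℤ) ^ j * (n + 1).choose j * h
  rw [sum_congr rfl hterm, ← mul_sum,
    sum_range_neg_one_pow_mul_choose_mul_choose_sub (n + 1) (n + k) p (by omega),
    show n + k - (n + 1) = k - 1 by omega]

theorem stmt_1 (n p k : ℕ) (hpn : p ≤ n) (hk : 1 ≤ k) :
    ∑ j ∈ Finset.range (p + 1),
      (-1 : ℤ) ^ j * (Nat.choose (n - j) (p - j)) * (Nat.choose (n + k - j) k) *
        (Nat.choose (n + 1) j)
      = (Nat.choose (n + k - p) k) * (Nat.choose (k - 1) p) :=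
  stmt_1_general n p k hk
end

section
/- For all natural numbers n, p, k with p ≤ n and k ≥ 1, one has the identity of natural numbers ∑_{s=p}^{n} C(s, p) · C(k-1, s) · C(n+1, n-s) = C(n+k-p, k) · C(k-1, p). -/
/-!
Write `k = m + 1`. The subset-of-a-subset identity `C(s, p) C(m, s) = C(m, p) C(m - p, s - p)`
pulls `C(m, p)` out of the sum, and what remains is Vandermonde's convolution
`∑ C(m - p, i) C(n + 1, n - p - i) = C(m - p + n + 1, n - p)`, which is `C(n + k - p, k)` by symmetry
whenever `p ≤ m`; if `p > m` both sides carry the factor `C(m, p) = 0`.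
-/

open Finset

theorem Finset.sum_Icc_sub_eq_sum_antidiagonal {M : Type*} [AddCommMonoid M] {p n : ℕ}
    (hpn : p ≤ n) (f : ℕ → ℕ → M) :
    ∑ s ∈ Icc p n, f (s - p) (n - s) = ∑ ij ∈ antidiagonal (n - p), f ij.1 ij.2 := by
  refine sum_nbij' (fun s ↦ (s - p, n - s)) (fun ij ↦ ij.1 + p) ?_ ?_ ?_ ?_ fun _ _ ↦ rfl <;>
    simp only [mem_Icc, HasAntidiagonal.mem_antidiagonal, Prod.ext_iff] <;> omega

theorem sum_choose_mul_choose_mul_choose (m n p : ℕ) (hpn : p ≤ n) :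
    ∑ s ∈ Icc p n, s.choose p * m.choose s * (n + 1).choose (n - s)
      = (n + (m + 1) - p).choose (m + 1) * m.choose p := by
  have hsummand : ∀ s ∈ Icc p n, s.choose p * m.choose s * (n + 1).choose (n - s)
      = m.choose p * ((m - p).choose (s - p) * (n + 1).choose (n - s)) := fun s hs ↦ by
    rw [mul_comm (s.choose p), Nat.choose_mul (mem_Icc.mp hs).1, mul_assoc]
  rw [sum_congr rfl hsummand, ← mul_sum, sum_Icc_sub_eq_sum_antidiagonal hpn
    (fun i j ↦ (m - p).choose i * (n + 1).choose j), ← Nat.add_choose_eq, mul_comm]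
  rcases le_or_gt p m with hpm | hmp
  · rw [Nat.choose_symm_of_eq_add (show n + (m + 1) - p = m + 1 + (n - p) by omega),
      show n + (m + 1) - p = m - p + (n + 1) by omega]
  · rw [Nat.choose_eq_zero_of_lt hmp, mul_zero, mul_zero]

theorem stmt_3 (n p k : ℕ) (hpn : p ≤ n) (hk : 1 ≤ k) :
    ∑ s ∈ Finset.Icc p n,
      Nat.choose s p * Nat.choose (k - 1) s * Nat.choose (n + 1) (n - s)
      = Nat.choose (n + k - p) k * Nat.choose (k - 1) p := by
  obtain ⟨m, rfl⟩ := Nat.exists_eq_add_of_le' hk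
  exact sum_choose_mul_choose_mul_choose m n p hpn
end

section
/- For all natural numbers n, s, p with s ≤ n and p ≤ n, one has the identity ∑_{j=0}^{n-s} (-1)^{j} · C(n-j, p) · C(n-s, j) = C(s, n-p), where the sum is taken in the integers. -/
/-!
Reindexing by `j ↦ m - j` with `m = n - s` turns the sum into the `m`-th forward difference of
`x ↦ C(x, p)` at `x = s`. Since `Δ C(x, p) = C(x, p - 1)`, this is `C(s, p - m)` when `m ≤ p` and
`0` otherwise, which is `C(s, n - p)` by symmetry of binomial coefficients.
-/

open Finset fwdDiff

lemma fwdDiff_iter_choose_eq_zero_of_lt {p k : ℕ} (h : p < k) :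
    (Δ_[1])^[k] (fun x ↦ x.choose p : ℕ → ℤ) = 0 := by
  obtain ⟨l, rfl⟩ := Nat.exists_eq_add_of_lt h
  have hp : (Δ_[1])^[p] (fun x ↦ x.choose p : ℕ → ℤ) = fun _ ↦ 1 := by
    simpa using fwdDiff_iter_choose 0 p
  rw [show p + l + 1 = l + 1 + p by ring, Function.iterate_add_apply, hp,
    Function.iterate_succ_apply, fwdDiff_const]
  exact Function.iterate_fixed (fwdDiff_const 1 0) l

lemma fwdDiff_iter_choose_apply (k p y : ℕ) :
    (Δ_[1])^[k] (fun x ↦ x.choose p : ℕ → ℤ) y =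
      if k ≤ p then (y.choose (p - k) : ℤ) else 0 := by
  split_ifs with hkp
  · obtain ⟨j, rfl⟩ := Nat.exists_eq_add_of_le hkp
    rw [fwdDiff_iter_choose, Nat.add_sub_cancel_left]
  · rw [fwdDiff_iter_choose_eq_zero_of_lt (not_le.mp hkp), Pi.zero_apply]

lemma sum_range_alternating_choose_mul_choose (m y p : ℕ) :
    ∑ j ∈ range (m + 1), (-1 : ℤ) ^ j * ((y + m - j).choose p) * (m.choose j) =
      (Δ_[1])^[m] (fun x ↦ x.choose p : ℕ → ℤ) y := by
  rw [fwdDiff_iter_eq_sum_shift, ← sum_range_reflect]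
  refine sum_congr rfl fun j hj ↦ ?_
  have hjm : j ≤ m := Nat.lt_succ_iff.mp (mem_range.mp hj)
  rw [Nat.add_sub_cancel, smul_eq_mul, Nat.choose_symm hjm, nsmul_one, Nat.cast_id,
    show y + m - (m - j) = y + j by omega]
  ring

theorem stmt_4 (n s p : ℕ) (hsn : s ≤ n) (hpn : p ≤ n) :
    ∑ j ∈ Finset.range (n - s + 1),
      (-1 : ℤ) ^ j * (Nat.choose (n - j) p) * (Nat.choose (n - s) j)
      = Nat.choose s (n - p) := by
  obtain ⟨m, rfl⟩ := Nat.exists_eq_add_of_le hsn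
  rw [Nat.add_sub_cancel_left, sum_range_alternating_choose_mul_choose, fwdDiff_iter_choose_apply]
  split_ifs with hmp
  · rw [show s + m - p = s - (p - m) by omega, Nat.choose_symm (by omega)]
  · rw [Nat.choose_eq_zero_of_lt (by omega), Nat.cast_zero]
end

section
/- Let m ≥ 1 and k ≥ 1 be integers, and let Δ ⊂ ℝ^3 be the convex hull of the four points (0,0,0), (1,0,0), (0,1,0), and (1,1,m). Then the number of points x ∈ ℤ^3 whose image in ℝ^3 lies in the dilated polytope k·Δ equals (m·k^3 + 6·k^2 + (12-m)·k + 6)/6. -/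
open scoped Pointwise
open Finset

/-!
`t • Δ` is cut out by four facet inequalities, homogeneous in `(p, t)`. So an integer point
`(a, b, c)` of `k • Δ` is a point `(a, b)` of the square `[0, k]²` together with
`c ∈ [m · max 0 (a + b - k), m · min a b]`, and the count is
`∑ (m · (min a b - max 0 (a + b - k)) + 1)` over the square. Reflecting `a ↦ k - a` turns
`max 0 (a + b - k)` into `max 0 (b - a) = b - min a b`, and the elementary sums `∑ b` and
`∑∑ max 0 (b - a) = k (k + 1) (k + 2) / 6` give `(k + 1)² + m (k³ - k) / 6`.
-/

section Sums

variable {n : ℤ}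

theorem two_mul_sum_Icc_zero_id (hn : 0 ≤ n) : 2 * ∑ a ∈ Icc 0 n, a = n * (n + 1) := by
  induction n, hn using Int.leInduction with
  | base => simp
  | succ n hn ih =>
    rw [← insert_Icc_right_eq_Icc_add_one (by omega), sum_insert (by simp), mul_add, ih]
    ring

theorem six_mul_sum_sum_max_zero_sub (hn : 0 ≤ n) :
    6 * ∑ a ∈ Icc 0 n, ∑ b ∈ Icc 0 n, max 0 (b - a) = n * (n + 1) * (n + 2) := by
  induction n, hn using Int.leInduction with
  | base => simp
  | succ n hn ih =>
    have hrow : ∀ b ∈ Icc 0 n, max 0 (b - (n + 1)) = 0 := by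
      intro b hb; rw [mem_Icc] at hb; omega
    have hcol : ∀ a ∈ Icc 0 n, max 0 (n + 1 - a) = n + 1 - a := by
      intro a ha; rw [mem_Icc] at ha; omega
    rw [← insert_Icc_right_eq_Icc_add_one (by omega)]
    simp only [sum_insert (show n + 1 ∉ Icc 0 n by simp), sum_add_distrib]
    rw [sub_self, max_self, sum_congr rfl hrow, sum_const_zero, sum_congr rfl hcol,
      sum_sub_distrib, sum_const, nsmul_eq_mul, Int.card_Icc_of_le 0 n (by omega)]
    linear_combination ih - 3 * two_mul_sum_Icc_zero_id hn

theorem six_mul_sum_sum_min_sub_max_zero (hn : 0 ≤ n) :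
    6 * ∑ a ∈ Icc 0 n, ∑ b ∈ Icc 0 n, (min a b - max 0 (a + b - n)) =
      (n - 1) * n * (n + 1) := by
  have hreflect : ∑ a ∈ Icc 0 n, ∑ b ∈ Icc 0 n, max 0 (a + b - n)
      = ∑ a ∈ Icc 0 n, ∑ b ∈ Icc 0 n, max 0 (b - a) := by
    refine sum_equiv (Equiv.subLeft n) (fun a => ?_) (fun a _ => ?_)
    · simp only [mem_Icc, Equiv.subLeft_apply]; omega
    · simp only [Equiv.subLeft_apply, sub_sub_eq_add_sub, add_comm]
  have hmin : ∀ a b : ℤ, min a b = b - max 0 (b - a) := by omega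
  simp only [hmin, sum_sub_distrib, hreflect, sum_const, nsmul_eq_mul,
    Int.card_Icc_of_le 0 n (by omega)]
  linear_combination 3 * (n + 1) * two_mul_sum_Icc_zero_id hn -
    2 * six_mul_sum_sum_max_zero_sub hn

end Sums

theorem natCard_prod_fibers {α β : Type*} (s : Finset α) (t : α → Finset β) :
    Nat.card {p : α × β // p.1 ∈ s ∧ p.2 ∈ t p.1} = ∑ a ∈ s, #(t a) := by
  rw [← card_sigma, ← Nat.card_eq_finsetCard]
  exact Nat.card_congr ((Equiv.sigmaEquivProd α β).subtypeEquiv fun p => by simp).symm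

def reeveTetrahedron (m t : ℝ) : Set (Fin 3 → ℝ) :=
  {p | 0 ≤ p 2 ∧ p 2 ≤ m * p 0 ∧ p 2 ≤ m * p 1 ∧ m * (p 0 + p 1 - t) ≤ p 2}

section Tetrahedron

variable {m t k : ℝ}

theorem convex_reeveTetrahedron : Convex ℝ (reeveTetrahedron m t) := by
  rintro p ⟨hp₁, hp₂, hp₃, hp₄⟩ q ⟨hq₁, hq₂, hq₃, hq₄⟩ a b ha hb hab
  simp only [reeveTetrahedron, Set.mem_ofPred_eq, Pi.add_apply, Pi.smul_apply, smul_eq_mul]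
  refine ⟨by positivity, ?_, ?_, ?_⟩ <;> nlinarith [mul_le_mul_of_nonneg_left hp₂ ha]

theorem smul_mem_reeveTetrahedron {p : Fin 3 → ℝ} (hk : 0 ≤ k)
    (hp : p ∈ reeveTetrahedron m t) : k • p ∈ reeveTetrahedron m (k * t) := by
  obtain ⟨h₁, h₂, h₃, h₄⟩ := hp
  simp only [reeveTetrahedron, Set.mem_ofPred_eq, Pi.smul_apply, smul_eq_mul]
  refine ⟨mul_nonneg hk h₁, ?_, ?_, ?_⟩ <;> nlinarith [mul_le_mul_of_nonneg_left h₂ hk,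
    mul_le_mul_of_nonneg_left h₃ hk, mul_le_mul_of_nonneg_left h₄ hk]

theorem smul_reeveTetrahedron (hk : 0 < k) :
    k • reeveTetrahedron m t = reeveTetrahedron m (k * t) := by
  refine (Set.smul_set_subset_iff.2 fun p hp => smul_mem_reeveTetrahedron hk.le hp).antisymm
    fun p hp => ⟨k⁻¹ • p, ?_, smul_inv_smul₀ hk.ne' p⟩
  simpa [inv_mul_cancel_left₀ hk.ne'] using smul_mem_reeveTetrahedron (inv_nonneg.2 hk.le) hp

theorem convexHull_reeve (hm : 0 < m) :
    convexHull ℝ {![0, 0, 0], ![1, 0, 0], ![0, 1, 0], ![1, 1, m]} = reeveTetrahedron m 1 := by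
  refine (convexHull_min ?_ convex_reeveTetrahedron).antisymm ?_
  · simp [Set.insert_subset_iff, reeveTetrahedron, hm.le]
  rintro p ⟨h₁, h₂, h₃, h₄⟩
  set d := p 2 / m
  have hd : d * m = p 2 := div_mul_cancel₀ _ hm.ne'
  have hd₀ : 0 ≤ d := by positivity
  have hd₁ : d ≤ p 0 := le_of_mul_le_mul_right (by linarith) hm
  have hd₂ : d ≤ p 1 := le_of_mul_le_mul_right (by linarith) hm
  have hd₃ : p 0 + p 1 - 1 ≤ d := le_of_mul_le_mul_right (by linarith) hm
  have hmem := (convex_convexHull ℝ {![0, 0, 0], ![1, 0, 0], ![0, 1, 0], ![1, 1, m]}).sum_mem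
    (t := univ) (w := ![1 - p 0 - p 1 + d, p 0 - d, p 1 - d, d])
    (z := ![![0, 0, 0], ![1, 0, 0], ![0, 1, 0], ![1, 1, m]])
    (by simp [Fin.forall_fin_succ]; exact ⟨by linarith, by linarith, by linarith, hd₀⟩)
    (by simp [Fin.sum_univ_four]; ring)
    (fun i _ => subset_convexHull ℝ _ (by fin_cases i <;> simp))
  convert hmem using 1
  ext i; fin_cases i <;> simp [Fin.sum_univ_four, hd]

end Tetrahedron

section LatticePoints

variable {m k : ℤ}

theorem intCast_mem_reeveTetrahedron_iff (hm : 0 < m) (x : Fin 3 → ℤ) :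
    (fun i => (x i : ℝ)) ∈ reeveTetrahedron m k ↔
      (x 0, x 1) ∈ Icc 0 k ×ˢ Icc 0 k ∧
        x 2 ∈ Icc (m * max 0 (x 0 + x 1 - k)) (m * min (x 0) (x 1)) := by
  simp only [reeveTetrahedron, Set.mem_ofPred_eq, mem_product, mem_Icc,
    mul_max_of_nonneg _ _ hm.le, mul_min_of_nonneg _ _ hm.le, max_le_iff, le_min_iff, mul_zero]
  norm_cast
  constructor
  · rintro ⟨h₁, h₂, h₃, h₄⟩
    refine ⟨⟨⟨?_, ?_⟩, ?_, ?_⟩, ⟨h₁, h₄⟩, h₂, h₃⟩ <;> nlinarith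
  · rintro ⟨-, ⟨h₁, h₄⟩, h₂, h₃⟩
    exact ⟨h₁, h₂, h₃, h₄⟩

theorem card_intPoints_reeveTetrahedron (hm : 0 < m) :
    (Nat.card {x : Fin 3 → ℤ // (fun i => (x i : ℝ)) ∈ reeveTetrahedron m k} : ℤ) =
      ∑ a ∈ Icc 0 k, ∑ b ∈ Icc 0 k, (m * (min a b - max 0 (a + b - k)) + 1) := by
  let e : (Fin 3 → ℤ) ≃ (ℤ × ℤ) × ℤ :=
    ⟨fun x => ((x 0, x 1), x 2), fun p => ![p.1.1, p.1.2, p.2],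
      fun x => by ext i; fin_cases i <;> rfl, fun _ => rfl⟩
  let fiber (ab : ℤ × ℤ) : Finset ℤ := Icc (m * max 0 (ab.1 + ab.2 - k)) (m * min ab.1 ab.2)
  rw [(Nat.card_congr (e.subtypeEquiv
      (q := fun p => p.1 ∈ Icc 0 k ×ˢ Icc 0 k ∧ p.2 ∈ fiber p.1)
      (intCast_mem_reeveTetrahedron_iff hm))).trans (natCard_prod_fibers _ fiber),
    Nat.cast_sum, sum_product]
  refine sum_congr rfl fun a ha => sum_congr rfl fun b hb => ?_
  rw [mem_Icc] at ha hb
  have hfiber : max 0 (a + b - k) ≤ min a b := by omega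
  dsimp only [fiber]
  rw [Int.card_Icc_of_le _ _ (by nlinarith)]
  ring

end LatticePoints

theorem stmt_8 (m k : ℤ) (hm : 1 ≤ m) (hk : 1 ≤ k) :
    (Nat.card {x : Fin 3 → ℤ //
        (fun i => (x i : ℝ)) ∈
          (k : ℝ) • convexHull ℝ
            ({![0, 0, 0], ![1, 0, 0], ![0, 1, 0], ![1, 1, (m : ℝ)]} : Set (Fin 3 → ℝ))} : ℤ)
      = (m * k ^ 3 + 6 * k ^ 2 + (12 - m) * k + 6) / 6 := by
  rw [convexHull_reeve (Int.cast_pos.2 (by omega)),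
    smul_reeveTetrahedron (Int.cast_pos.2 (by omega)), mul_one,
    card_intPoints_reeveTetrahedron (by omega)]
  refine (Int.ediv_eq_of_eq_mul_left (by norm_num) ?_).symm
  simp only [sum_add_distrib, ← mul_sum, sum_const, nsmul_eq_mul, mul_one,
    Int.card_Icc_of_le 0 k (by omega)]
  linear_combination -m * six_mul_sum_sum_min_sub_max_zero (n := k) (by omega)
end
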